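/- arXiv:1806.00152 — 3 statements merged into one kernel-verified Lean document; each statement's English description precedes it below -/
import Mathlib

section
/- Let Ω be a finite set, X ⊆ Ω^k a symmetric subset (stable under permutation of coordinates), and f : X → ℂ a symmetric function. With F, F_τ, sign(τ) as in the distinct-coordinate sieving formula, we have F = Σ over conjugacy classes τ of S_k of sign(τ) · C(τ) · F_τ, where C(τ) is the size of the conjugacy class of τ. -/
/-!
For a non-injective `x`, the permutations fixing `x` contain a transposition, so left
multiplication by it pairs them off with opposite signs; hence `∑_{σ x = x} sign σ` is the
indicator of injectivity, and swapping sums gives `F = ∑_σ sign(σ) F_σ` over all of `S_k`.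
For symmetric `X` and `f`, conjugating `σ` by `c` corresponds to the bijection `x ↦ x ∘ c`
between the points fixed by the two permutations, so `σ ↦ sign(σ) F_σ` is a class function
and the sum collapses to one term per conjugacy class, weighted by its size.
-/

open Finset

namespace Equiv.Perm

variable {α Ω : Type*} [Fintype α] [DecidableEq Ω]

section Symmetric

variable {M : Type*} [AddCommMonoid M] {X : Finset (α → Ω)} {f : (α → Ω) → M}

theorem comp_mem_filter_fixing (hX : ∀ (τ : Perm α) (x : α → Ω), x ∈ X → x ∘ τ ∈ X)
    {σ τ c : Perm α} (hc : σ * c = c * τ) {x : α → Ω}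
    (hx : x ∈ X.filter (fun x => ∀ i, x (σ i) = x i)) :
    x ∘ c ∈ X.filter (fun x => ∀ i, x (τ i) = x i) := by
  rw [mem_filter] at hx ⊢
  refine ⟨hX c x hx.1, fun i => ?_⟩
  have hi : c (τ i) = σ (c i) := by rw [← mul_apply, ← hc, mul_apply]
  simp only [Function.comp_apply, hi, hx.2]

theorem sum_filter_fixing_eq_of_isConj
    (hX : ∀ (τ : Perm α) (x : α → Ω), x ∈ X → x ∘ τ ∈ X)
    (hf : ∀ (τ : Perm α) (x : α → Ω), x ∈ X → f (x ∘ τ) = f x)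
    {σ τ : Perm α} (h : IsConj σ τ) :
    ∑ x ∈ X.filter (fun x => ∀ i, x (σ i) = x i), f x =
      ∑ x ∈ X.filter (fun x => ∀ i, x (τ i) = x i), f x := by
  obtain ⟨c, hc⟩ := isConj_iff.1 h.symm
  have hσc : σ * c = c * τ := by rw [← hc]; group
  have hτc : τ * c⁻¹ = c⁻¹ * σ := by rw [← hc]; group
  refine sum_nbij' (· ∘ c) (· ∘ ⇑c⁻¹) (fun x hx => comp_mem_filter_fixing hX hσc hx)
    (fun x hx => comp_mem_filter_fixing hX hτc hx) (fun x _ => ?_) (fun x _ => ?_)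
    (fun x hx => (hf c x (mem_filter.1 hx).1).symm)
  all_goals ext i; simp

end Symmetric

section Sieve

variable [DecidableEq α]

/-- `(card α - σ.cycleType.sum) + card σ.cycleType` is `l(σ)`, the number of cycles of `σ`
counting fixed points. -/
theorem sign_eq_neg_one_pow_card_sub_numCycles (σ : Perm α) :
    sign σ = (-1 : ℤˣ) ^ (Fintype.card α -
      ((Fintype.card α - σ.cycleType.sum) + Multiset.card σ.cycleType)) := by
  have hcard : Multiset.card σ.cycleType ≤ σ.cycleType.sum := by
    simpa using Multiset.card_nsmul_le_sum (s := σ.cycleType) (a := 1)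
      fun n hn => (one_lt_of_mem_cycleType hn).le
  have hsum := sum_cycleType_le σ
  have hexp : σ.cycleType.sum + Multiset.card σ.cycleType =
      (Fintype.card α - ((Fintype.card α - σ.cycleType.sum) + Multiset.card σ.cycleType)) +
        2 * Multiset.card σ.cycleType := by
    omega
  rw [sign_of_cycleType, hexp, pow_add, pow_mul]
  simp

theorem sum_sign_filter_fixing_eq_ite (x : α → Ω) :
    ∑ σ ∈ univ.filter (fun σ : Perm α => ∀ i, x (σ i) = x i), (sign σ : ℤ) =
      if Function.Injective x then 1 else 0 := by
  split_ifs with hinj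
  · rw [sum_eq_single_of_mem 1 (by simp)]
    · simp
    · intro σ hσ hne
      exact absurd (Equiv.ext fun i => hinj ((mem_filter.1 hσ).2 i)) hne
  · obtain ⟨i, j, hxij, hij⟩ : ∃ i j, x i = x j ∧ i ≠ j := by
      simpa [Function.Injective] using hinj
    have hswap : ∀ m, x (swap i j m) = x m := by
      intro m
      rcases eq_or_ne m i with rfl | hmi
      · simp [hxij]
      rcases eq_or_ne m j with rfl | hmj
      · simp [hxij]
      · rw [swap_apply_of_ne_of_ne hmi hmj]
    have hneg : ∑ σ ∈ univ.filter (fun σ : Perm α => ∀ i, x (σ i) = x i), (sign σ : ℤ) =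
        -∑ σ ∈ univ.filter (fun σ : Perm α => ∀ i, x (σ i) = x i), (sign σ : ℤ) := by
      rw [← sum_neg_distrib]
      refine sum_equiv (Equiv.mulLeft (swap i j)) (fun σ => ?_) (fun σ _ => ?_)
      · simp [hswap]
      · simp [sign_mul, sign_swap hij]
    omega

theorem sum_filter_injective_eq_sum_sign_smul {M : Type*} [AddCommGroup M]
    (X : Finset (α → Ω)) (f : (α → Ω) → M) :
    ∑ x ∈ X.filter Function.Injective, f x =
      ∑ σ : Perm α, (sign σ : ℤ) • ∑ x ∈ X.filter (fun x => ∀ i, x (σ i) = x i), f x := by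
  simp_rw [smul_sum]
  rw [sum_comm' (t' := X) (s' := fun x => univ.filter fun σ : Perm α => ∀ i, x (σ i) = x i)
    (by simp [and_comm])]
  simp_rw [← sum_smul, sum_sign_filter_fixing_eq_ite, ite_smul, one_smul, zero_smul]
  rw [sum_filter]

end Sieve

end Equiv.Perm

theorem sum_eq_sum_card_isConj_smul {G M : Type*} [Group G] [Fintype G]
    [AddCommMonoid M] (R : Finset G) (hR : ∀ a : G, ∃! τ, τ ∈ R ∧ IsConj τ a) (g : G → M)
    (hg : ∀ a b, IsConj a b → g a = g b) :
    ∑ a, g a = ∑ τ ∈ R, Nat.card {a // IsConj τ a} • g τ := by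
  classical
  have hrep : ∀ a, ∑ τ ∈ R, (if IsConj τ a then g a else 0) = g a := by
    intro a
    obtain ⟨τ, ⟨hτR, hτ⟩, huniq⟩ := hR a
    rw [sum_eq_single_of_mem τ hτR (fun b hb hne => if_neg fun h => hne (huniq b ⟨hb, h⟩)),
      if_pos hτ]
  calc ∑ a, g a = ∑ τ ∈ R, ∑ a ∈ univ.filter (IsConj τ), g a := by
        simp_rw [sum_filter]
        rw [sum_comm]
        exact sum_congr rfl fun a _ => (hrep a).symm
    _ = ∑ τ ∈ R, Nat.card {a // IsConj τ a} • g τ := by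
        refine sum_congr rfl fun τ _ => ?_
        rw [sum_congr rfl fun a ha => (hg τ a (mem_filter.1 ha).2).symm, sum_const,
          Nat.card_eq_fintype_card, Fintype.card_subtype]

theorem stmt_3_general {Ω : Type*} [DecidableEq Ω] (k : ℕ)
    (X : Finset (Fin k → Ω)) (f : (Fin k → Ω) → ℂ)
    (hX : ∀ (τ : Equiv.Perm (Fin k)) (x : Fin k → Ω), x ∈ X → (x ∘ τ) ∈ X)
    (hf : ∀ (τ : Equiv.Perm (Fin k)) (x : Fin k → Ω), x ∈ X → f (x ∘ τ) = f x)
    (R : Finset (Equiv.Perm (Fin k)))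
    (hR : ∀ σ : Equiv.Perm (Fin k), ∃! τ, τ ∈ R ∧ IsConj τ σ) :
    ∑ x ∈ X.filter (fun x => Function.Injective x), f x
      = ∑ τ ∈ R,
          (-1 : ℂ) ^ (k - ((k - τ.cycleType.sum) + τ.cycleType.card)) *
            (Nat.card {σ : Equiv.Perm (Fin k) // IsConj τ σ}) *
            ∑ x ∈ X.filter (fun x => ∀ i, x (τ i) = x i), f x := by
  rw [Equiv.Perm.sum_filter_injective_eq_sum_sign_smul,
    sum_eq_sum_card_isConj_smul R hR]
  · refine sum_congr rfl fun τ _ => ?_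
    rw [Equiv.Perm.sign_eq_neg_one_pow_card_sub_numCycles, Fintype.card_fin, nsmul_eq_mul,
      zsmul_eq_mul]
    push_cast
    rw [mul_left_comm, mul_assoc]
    -- the filters differ only in their decidability instances
    congr!
  · intro σ τ h
    rw [Equiv.Perm.sum_filter_fixing_eq_of_isConj hX hf h,
      isConj_iff_eq.1 (Equiv.Perm.sign.map_isConj h)]

/-- The symmetric version of the sieving formula: if `X` is symmetric and
`f` is symmetric, then `F = ∑_{conjugacy classes τ} sign(τ) C(τ) F_τ`, where `C(τ)` is
the size of the conjugacy class of `τ`, expressed via a set `R` of representatives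
containing exactly one element from each conjugacy class of `S_k`. -/
theorem stmt_3 {Ω : Type*} [Fintype Ω] [DecidableEq Ω] (k : ℕ) (hk : 0 < k)
    (X : Finset (Fin k → Ω)) (f : (Fin k → Ω) → ℂ)
    (hX : ∀ (τ : Equiv.Perm (Fin k)) (x : Fin k → Ω), x ∈ X → (x ∘ τ) ∈ X)
    (hf : ∀ (τ : Equiv.Perm (Fin k)) (x : Fin k → Ω), x ∈ X → f (x ∘ τ) = f x)
    (R : Finset (Equiv.Perm (Fin k)))
    (hR : ∀ σ : Equiv.Perm (Fin k), ∃! τ, τ ∈ R ∧ IsConj τ σ) :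
    ∑ x ∈ X.filter (fun x => Function.Injective x), f x
      = ∑ τ ∈ R,
          (-1 : ℂ) ^ (k - ((k - τ.cycleType.sum) + τ.cycleType.card)) *
            (Nat.card {σ : Equiv.Perm (Fin k) // IsConj τ σ}) *
            ∑ x ∈ X.filter (fun x => ∀ i, x (τ i) = x i), f x :=
  stmt_3_general k X f hX hf R hR
end

section
/- Let q be a prime power, 1 ≤ k ≤ q − 1, and 0 ≤ r ≤ k. The number of polynomials g ∈ F_q[x] of degree at most k−1 such that x^k + g(x) has exactly r distinct roots in F_q equals C(q, r) · q^{k−r} · Σ_{j=0}^{k−r} (−1)^j C(q−r, j) q^{−j}. -/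
/-!
If `U ⊆ F` has at most `k` points, then `X ^ k + g` vanishes on `U` exactly when `g` takes the
values `-a ^ k` at the points `a ∈ U`. By Lagrange interpolation, evaluation on `U` is a
surjective linear map from the polynomials of degree `< k` onto `F ^ U`, so this happens for
exactly `q ^ (k - |U|)` polynomials `g`; for `|U| > k` it never happens. Inclusion–exclusion over the
extra roots `T ⊆ F \ S` turns these counts into the number of `g` whose root set is exactly `S`,
and summing over the `C(q, r)` sets `S` of size `r` gives the formula.
-/

open Finset

section Combinatorics

variable {α : Type*} [Fintype α] [DecidableEq α]

theorem sum_powerset_sdiff_neg_one_pow_mul_ite_union_subset (S R : Finset α) :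
    ∑ T ∈ (univ \ S).powerset, (-1 : ℤ) ^ #T * (if S ∪ T ⊆ R then 1 else 0)
      = if R = S then 1 else 0 := by
  simp only [mul_ite, mul_one, mul_zero, ← sum_filter, union_subset_iff]
  by_cases hSR : S ⊆ R
  · have hfilter : {T ∈ (univ \ S).powerset | S ⊆ R ∧ T ⊆ R} = (R \ S).powerset := by
      ext T
      simp only [mem_filter, mem_powerset, subset_sdiff, hSR, true_and, subset_univ]
      tauto
    rw [hfilter, sum_powerset_neg_one_pow_card]
    exact if_congr (sdiff_eq_empty_iff_subset.trans ⟨fun h => h.antisymm hSR, fun h => h.le⟩)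
      rfl rfl
  · rw [filter_false_of_mem fun T _ h => hSR h.1, sum_empty, if_neg fun h => hSR h.ge]

theorem card_filter_eq_eq_sum_powerset_sdiff {β : Type*} [Fintype β] (R : β → Finset α)
    (S : Finset α) :
    (#{x | R x = S} : ℤ)
      = ∑ T ∈ (univ \ S).powerset, (-1) ^ #T * (#{x | S ∪ T ⊆ R x} : ℤ) := by
  simp only [card_filter, Nat.cast_sum, Nat.cast_ite, Nat.cast_one, Nat.cast_zero, mul_sum]
  rw [sum_comm]
  exact sum_congr rfl fun x _ =>
    (sum_powerset_sdiff_neg_one_pow_mul_ite_union_subset S (R x)).symm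

end Combinatorics

theorem sum_range_choose_mul_ite_le {R : Type*} [Semiring R] (n m : ℕ) (f : ℕ → R) :
    ∑ j ∈ range (n + 1), (n.choose j : R) * (if j ≤ m then f j else 0)
      = ∑ j ∈ range (m + 1), (n.choose j : R) * f j := by
  simp only [mul_ite, mul_zero, ← sum_filter]
  refine sum_subset (fun j hj => ?_) (fun j hj hj' => ?_)
  · simp only [mem_filter, mem_range] at hj ⊢
    omega
  · simp only [mem_filter, mem_range, not_and, not_le] at hj hj'
    rw [Nat.choose_eq_zero_of_lt (by omega), Nat.cast_zero, zero_mul]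

theorem LinearMap.card_filter_eq_of_surjective {K V W : Type*} [Field K] [Fintype K]
    [AddCommGroup V] [Module K V] [Fintype V] [AddCommGroup W] [Module K W] [DecidableEq W]
    (f : V →ₗ[K] W) (hf : Function.Surjective f) (w : W) :
    #{v | f v = w} = Fintype.card K ^ (Module.finrank K V - Module.finrank K W) := by
  obtain ⟨v₀, rfl⟩ := hf w
  have hfiber : #{v | f v = f v₀} = #{v | f v = 0} :=
    card_nbij' (· - v₀) (· + v₀) (fun v hv => by simp_all) (fun v hv => by simp_all)
      (fun _ _ => sub_add_cancel _ _) (fun _ _ => add_sub_cancel_right _ _)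
  have hker : #{v | f v = 0} = Fintype.card K ^ Module.finrank K (LinearMap.ker f) := by
    rw [Fintype.card_eq_nat_card, ← Module.natCard_eq_pow_finrank]
    change _ = Nat.card {v // f v = 0}
    rw [Nat.card_eq_fintype_card, Fintype.card_subtype]
  rw [hfiber, hker, ← f.finrank_range_add_finrank_ker, LinearMap.range_eq_top.2 hf,
    finrank_top, Nat.add_sub_cancel_left]

namespace Polynomial

variable {F : Type*} [Field F]

noncomputable instance [Fintype F] (k : ℕ) : Fintype (degreeLT F k) :=
  Fintype.ofEquiv _ (degreeLTEquiv F k).toEquiv.symm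

theorem finrank_degreeLT (k : ℕ) : Module.finrank F (degreeLT F k) = k := by
  rw [(degreeLTEquiv F k).finrank_eq, Module.finrank_fin_fun]

theorem natDegree_X_pow_add_of_mem_degreeLT {k : ℕ} (g : degreeLT F k) :
    (X ^ k + (g : F[X])).natDegree = k := by
  rw [natDegree_add_eq_left_of_degree_lt (by rw [degree_X_pow]; exact mem_degreeLT.1 g.2),
    natDegree_X_pow]

noncomputable def evalOnDegreeLT (U : Finset F) (k : ℕ) : degreeLT F k →ₗ[F] (U → F) :=
  LinearMap.pi fun a => (leval (a : F)).comp (degreeLT F k).subtype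

theorem evalOnDegreeLT_apply (U : Finset F) (k : ℕ) (g : degreeLT F k) (a : U) :
    evalOnDegreeLT U k g a = (g : F[X]).eval (a : F) := rfl

theorem evalOnDegreeLT_surjective {U : Finset F} {k : ℕ} (hU : #U ≤ k) :
    Function.Surjective (evalOnDegreeLT U k) := by
  classical
  intro w
  set v : F → F := fun a => if h : a ∈ U then w ⟨a, h⟩ else 0
  have hp : Lagrange.interpolate U id v ∈ degreeLT F k := mem_degreeLT.2 <|
    (Lagrange.degree_interpolate_lt _ (Set.injOn_id _)).trans_le (by exact_mod_cast hU)
  refine ⟨⟨_, hp⟩, ?_⟩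
  ext a
  have hnode := Lagrange.eval_interpolate_at_node v (Set.injOn_id _) a.2
  simp only [id, v, a.2, dif_pos, Subtype.coe_eta] at hnode
  exact hnode

variable [Fintype F] [DecidableEq F]

noncomputable def rootsXPowAdd {k : ℕ} (g : degreeLT F k) : Finset F :=
  {a | (X ^ k + (g : F[X])).eval a = 0}

theorem card_rootsXPowAdd_le {k : ℕ} (g : degreeLT F k) : #(rootsXPowAdd g) ≤ k := by
  have hne : X ^ k + (g : F[X]) ≠ 0 := (monic_X_pow_add (mem_degreeLT.1 g.2)).ne_zero
  refine (card_le_degree_of_subset_roots fun a ha => ?_).trans_eq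
    (natDegree_X_pow_add_of_mem_degreeLT g)
  simpa [mem_roots hne, rootsXPowAdd] using ha

theorem card_filter_subset_rootsXPowAdd (k : ℕ) (U : Finset F) :
    #{g : degreeLT F k | U ⊆ rootsXPowAdd g}
      = if #U ≤ k then Fintype.card F ^ (k - #U) else 0 := by
  split_ifs with hU
  · have hiff : ∀ g : degreeLT F k,
        U ⊆ rootsXPowAdd g ↔ evalOnDegreeLT U k g = fun a : U => -(a : F) ^ k := by
      intro g
      simp [funext_iff, subset_iff, rootsXPowAdd, evalOnDegreeLT_apply, eq_neg_iff_add_eq_zero,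
        add_comm]
    rw [filter_congr fun g _ => hiff g,
      LinearMap.card_filter_eq_of_surjective _ (evalOnDegreeLT_surjective hU),
      finrank_degreeLT, Module.finrank_fintype_fun_eq_card, Fintype.card_coe]
  · rw [card_eq_zero, filter_eq_empty_iff]
    exact fun g _ hUg => hU ((card_le_card hUg).trans (card_rootsXPowAdd_le g))

theorem card_filter_rootsXPowAdd_eq {k : ℕ} {S : Finset F} (hS : #S ≤ k) :
    (#{g : degreeLT F k | rootsXPowAdd g = S} : ℤ)
      = ∑ j ∈ range (k - #S + 1),
          ((Fintype.card F - #S).choose j : ℤ) * ((-1) ^ j * Fintype.card F ^ (k - #S - j)) := by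
  set term : ℕ → ℤ := fun j =>
    if j ≤ k - #S then (-1) ^ j * (Fintype.card F : ℤ) ^ (k - #S - j) else 0
  have hterm : ∀ T ∈ (univ \ S).powerset,
      (-1) ^ #T * (#{g : degreeLT F k | S ∪ T ⊆ rootsXPowAdd g} : ℤ) = term #T := by
    intro T hT
    have hdisj : Disjoint S T := disjoint_of_subset_right (mem_powerset.1 hT) disjoint_sdiff
    rw [card_filter_subset_rootsXPowAdd, card_union_of_disjoint hdisj, Nat.sub_add_eq]
    simp only [term]
    split_ifs <;> first | omega | push_cast; ring
  rw [card_filter_eq_eq_sum_powerset_sdiff, sum_congr rfl hterm, sum_powerset_apply_card term,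
    card_univ_sdiff]
  simp only [nsmul_eq_mul]
  exact sum_range_choose_mul_ite_le _ _ _

theorem card_filter_card_rootsXPowAdd_eq {k r : ℕ} (hr : r ≤ k) :
    (#{g : degreeLT F k | #(rootsXPowAdd g) = r} : ℤ)
      = (Fintype.card F).choose r * ∑ j ∈ range (k - r + 1),
          ((Fintype.card F - r).choose j : ℤ) * ((-1) ^ j * Fintype.card F ^ (k - r - j)) := by
  have hfiber := sum_card_fiberwise_eq_card_filter univ (powersetCard r univ)
    (rootsXPowAdd (F := F) (k := k))
  simp only [mem_powersetCard, subset_univ, true_and] at hfiber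
  rw [← hfiber, Nat.cast_sum, sum_congr rfl fun S hS => by
      obtain ⟨-, hSr⟩ := mem_powersetCard.1 hS
      rw [card_filter_rootsXPowAdd_eq (hSr.trans_le hr), hSr],
    sum_const, card_powersetCard, card_univ, nsmul_eq_mul]

end Polynomial

open Polynomial

theorem stmt_9_general {F : Type*} [Field F] [Fintype F] [DecidableEq F]
    (q k r : ℕ) (hcard : Fintype.card F = q)
    (hr : r ≤ k) :
    (Nat.card {g : Polynomial F // g.degree < (k : ℕ) ∧
        (Finset.univ.filter (fun a : F => (X ^ k + g).eval a = 0)).card = r} : ℝ)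
      = (q.choose r : ℝ) * (q : ℝ) ^ (k - r) *
          ∑ j ∈ Finset.range (k - r + 1), (-1 : ℝ) ^ j * ((q - r).choose j : ℝ) *
            ((q : ℝ)⁻¹) ^ j := by
  have hsubtype : Nat.card {g : Polynomial F // g.degree < (k : ℕ) ∧
      (Finset.univ.filter (fun a : F => (X ^ k + g).eval a = 0)).card = r}
        = #{g : degreeLT F k | #(rootsXPowAdd g) = r} := by
    rw [← Fintype.card_subtype, ← Nat.card_eq_fintype_card]
    exact Nat.card_congr
      { toFun := fun g => ⟨⟨g.1, mem_degreeLT.2 g.2.1⟩, g.2.2⟩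
        invFun := fun g => ⟨g.1, mem_degreeLT.1 g.1.2, g.2⟩
        left_inv := fun _ => rfl
        right_inv := fun _ => rfl }
  have hcount := congrArg (Int.cast : ℤ → ℝ) (card_filter_card_rootsXPowAdd_eq (F := F) hr)
  push_cast at hcount
  have hq : (q : ℝ) ≠ 0 := by rw [← hcard]; exact_mod_cast Fintype.card_ne_zero
  rw [hsubtype, hcount, hcard, mul_assoc]
  congr 1
  rw [mul_sum]
  refine sum_congr rfl fun j hj => ?_
  rw [pow_sub₀ _ hq (by simpa [Nat.lt_succ_iff] using hj), inv_pow]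
  ring

/-- The number of polynomials `g` of degree at most `k-1` such that
`x^k + g(x)` has exactly `r` distinct roots in `F_q` equals
`C(q,r) q^(k-r) ∑_{j=0}^{k-r} (-1)^j C(q-r, j) q^(-j)`. -/
theorem stmt_9 {F : Type*} [Field F] [Fintype F] [DecidableEq F]
    (q k r : ℕ) (hcard : Fintype.card F = q)
    (hk : 1 ≤ k) (hkq : k ≤ q - 1) (hr : r ≤ k) :
    (Nat.card {g : Polynomial F // g.degree < (k : ℕ) ∧
        (Finset.univ.filter (fun a : F => (X ^ k + g).eval a = 0)).card = r} : ℝ)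
      = (q.choose r : ℝ) * (q : ℝ) ^ (k - r) *
          ∑ j ∈ Finset.range (k - r + 1), (-1 : ℝ) ^ j * ((q - r).choose j : ℝ) *
            ((q : ℝ)⁻¹) ^ j :=
  stmt_9_general q k r hcard hr
end

section
/- Let q be a prime power with q = p prime, and let k = ⌊cp⌋, m = ⌊p^δ⌋, r = k + ⌊p^λ⌋ where c ∈ (0,1), δ ∈ (0, 1/4), λ ∈ (0, δ) are fixed constants. Then lim_{p→∞} [m · C(k+m, m) · p^m · C(m√p + 1 + k + m, m√p + 1)] / C(p, r) = 0. -/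
/-!
The numerator is only `exp (O (p ^ (3/4) * log p))`: the factors `m`, `C(k+m, m)` and `p ^ m`
are at most `(2p) ^ m` with `m ≤ p ^ (1/4)`, and the generalized binomial coefficient is the
product `C(b + K, b) = ∏_{i<K} (1 + b / (i+1)) ≤ exp (b H_K)` with `b = m √p + 1 ≤ 2 p ^ (3/4)`
and `K = k + m ≤ 2p`. The denominator is exponentially large: for `a ∈ (c, 1)` we eventually
have `c p / 2 ≤ r ≤ a p`, hence `C(p, r) ≥ (p / r) ^ r ≥ a⁻¹ ^ r ≥ exp (c p log a⁻¹ / 2)`.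
-/

open Filter

/-- Generalized (real-argument) binomial coefficient `C(a,b) = Γ(a+1)/(Γ(b+1)Γ(a-b+1))`. -/
noncomputable def gchoose (a b : ℝ) : ℝ :=
  Real.Gamma (a + 1) / (Real.Gamma (b + 1) * Real.Gamma (a - b + 1))

open Finset Real Asymptotics Topology

theorem Real.Gamma_add_natCast {b : ℝ} (hb : 0 < b) (K : ℕ) :
    Gamma (b + K) = Gamma b * ∏ i ∈ range K, (b + i) := by
  induction K with
  | zero => simp
  | succ K ih =>
    rw [Nat.cast_succ, ← add_assoc, Gamma_add_one (by positivity), ih, prod_range_succ]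
    ring

theorem gchoose_add_natCast {b : ℝ} (hb : -1 < b) (K : ℕ) :
    gchoose (b + K) b = ∏ i ∈ range K, (b + 1 + i) / (i + 1) := by
  have hb₁ : 0 < b + 1 := by linarith
  have hK : (K : ℝ) + 1 = 1 + K := add_comm _ _
  rw [gchoose, add_right_comm, Gamma_add_natCast hb₁, add_sub_cancel_left,
    hK, Gamma_add_natCast one_pos, Gamma_one, one_mul,
    mul_div_mul_left _ _ (Gamma_pos_of_pos hb₁).ne', prod_div_distrib]
  simp only [add_comm (1 : ℝ)]

theorem gchoose_add_natCast_nonneg {b : ℝ} (hb : -1 < b) (K : ℕ) :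
    0 ≤ gchoose (b + K) b := by
  rw [gchoose_add_natCast hb]
  exact prod_nonneg fun i _ => div_nonneg (by linarith [i.cast_nonneg (α := ℝ)]) (by positivity)

theorem gchoose_add_natCast_le_exp {b : ℝ} (hb : 0 ≤ b) (K : ℕ) :
    gchoose (b + K) b ≤ exp (b * (1 + log K)) := by
  have hharm : ∑ i ∈ range K, b / (i + 1) = b * harmonic K := by
    rw [harmonic]
    push_cast
    rw [mul_sum]
    simp only [div_eq_mul_inv]
  calc gchoose (b + K) b = ∏ i ∈ range K, (b / (i + 1) + 1) := by
        rw [gchoose_add_natCast (by linarith)]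
        refine prod_congr rfl fun i _ => ?_
        field_simp
        ring
    _ ≤ ∏ i ∈ range K, exp (b / (i + 1)) :=
        prod_le_prod (fun i _ => by positivity) fun i _ => add_one_le_exp _
    _ = exp (b * harmonic K) := by rw [← exp_sum, hharm]
    _ ≤ exp (b * (1 + log K)) := by
        gcongr
        exact harmonic_le_one_add_log K

theorem Nat.pow_le_pow_mul_choose {n k : ℕ} (h : k ≤ n) : n ^ k ≤ k ^ k * n.choose k := by
  have key : n ^ k * k.descFactorial k ≤ k ^ k * n.descFactorial k := by
    have hpow : ∀ x : ℕ, x ^ k = ∏ _i ∈ range k, x := fun x => by rw [prod_const, card_range]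
    rw [descFactorial_eq_prod_range, descFactorial_eq_prod_range, hpow n, hpow k,
      ← prod_mul_distrib, ← prod_mul_distrib]
    refine prod_le_prod' fun i _ => ?_
    rw [Nat.mul_sub, Nat.mul_sub, Nat.mul_comm n k]
    exact Nat.sub_le_sub_left (Nat.mul_le_mul_right i h) _
  rw [descFactorial_self, descFactorial_eq_factorial_mul_choose, Nat.mul_left_comm] at key
  exact Nat.le_of_mul_le_mul_left (by rwa [Nat.mul_comm k.factorial]) k.factorial_pos

theorem inv_pow_le_choose {a : ℝ} {n r : ℕ} (ha₀ : 0 < a) (ha₁ : a ≤ 1) (hr : (r : ℝ) ≤ a * n) :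
    a⁻¹ ^ r ≤ n.choose r := by
  have hrn : r ≤ n := by exact_mod_cast hr.trans (mul_le_of_le_one_left (by positivity) ha₁)
  have key : (n : ℝ) ^ r ≤ r ^ r * n.choose r := by exact_mod_cast Nat.pow_le_pow_mul_choose hrn
  rcases (Nat.zero_le n).eq_or_lt with rfl | hn
  · simp_all
  have hra : (r : ℝ) ^ r ≤ a ^ r * n ^ r := by
    rw [← mul_pow]; exact pow_le_pow_left₀ (by positivity) hr r
  rw [inv_pow, inv_le_iff_one_le_mul₀' (by positivity)]
  have hnr : (0 : ℝ) < n ^ r := by positivity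
  nlinarith [Nat.cast_nonneg (α := ℝ) (n.choose r)]

noncomputable def numeratorTerm (k m n : ℕ) : ℝ :=
  (m : ℝ) * ((k + m).choose m : ℝ) * (n : ℝ) ^ m *
    gchoose ((m : ℝ) * √n + 1 + (k : ℝ) + (m : ℝ)) ((m : ℝ) * √n + 1)

theorem numeratorTerm_nonneg (k m n : ℕ) : 0 ≤ numeratorTerm k m n := by
  have hg := gchoose_add_natCast_nonneg (b := m * √n + 1)
    (neg_one_lt_zero.trans (by positivity)) (k + m)
  rw [Nat.cast_add, ← add_assoc] at hg
  unfold numeratorTerm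
  positivity

theorem mul_choose_mul_pow_mul_gchoose_le_exp {k m n : ℕ} {b : ℝ} (hn : 0 < n) (hk : k ≤ n)
    (hm : m ≤ n) (hb : 0 ≤ b) :
    (m : ℝ) * (k + m).choose m * n ^ m * gchoose (b + k + m) b ≤
      exp ((1 + 2 * m + b) * (2 + log n)) := by
  rw [add_assoc b, ← Nat.cast_add]
  set L := 2 + log n with hL
  have hn₁ : (1 : ℝ) ≤ n := by exact_mod_cast hn
  have hlog : log (2 * n) ≤ 1 + log n := by
    rw [log_mul two_ne_zero (by positivity)]
    linarith [log_two_lt_d9]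
  have hpow : ((2 : ℝ) * n) ^ m ≤ exp (m * L) := by
    rw [← exp_log (by positivity : (0 : ℝ) < 2 * n), ← exp_nat_mul]
    gcongr
    linarith
  have hkm : ((k + m : ℕ) : ℝ) ≤ 2 * n := by
    push_cast
    linarith [(Nat.cast_le (α := ℝ)).2 hk, (Nat.cast_le (α := ℝ)).2 hm]
  have h₁ : (m : ℝ) ≤ exp L :=
    calc (m : ℝ) ≤ n := by exact_mod_cast hm
      _ = exp (log n) := (exp_log (by positivity)).symm
      _ ≤ exp L := by gcongr; linarith
  have h₂ : ((k + m).choose m : ℝ) ≤ exp (m * L) := by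
    calc ((k + m).choose m : ℝ) ≤ ((k + m : ℕ) : ℝ) ^ m := by exact_mod_cast Nat.choose_le_pow _ _
      _ ≤ _ := (pow_le_pow_left₀ (by positivity) hkm m).trans hpow
  have h₃ : (n : ℝ) ^ m ≤ exp (m * L) :=
    (pow_le_pow_left₀ (by positivity) (by linarith) m).trans hpow
  have h₄ : gchoose (b + (k + m : ℕ)) b ≤ exp (b * L) := by
    refine (gchoose_add_natCast_le_exp hb _).trans ?_
    have : log (k + m : ℕ) ≤ log (2 * n) := by
      rcases (k + m).eq_zero_or_pos with h | h
      · rw [h, Nat.cast_zero, log_zero]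
        exact log_nonneg (by linarith)
      · exact log_le_log (by positivity) hkm
    gcongr
    linarith
  calc (m : ℝ) * (k + m).choose m * n ^ m * gchoose (b + (k + m : ℕ)) b
      ≤ exp L * exp (m * L) * exp (m * L) * exp (b * L) := by
        gcongr
        exact gchoose_add_natCast_nonneg (by linarith) _
    _ = exp ((1 + 2 * m + b) * L) := by
        simp only [← exp_add]
        ring_nf

theorem numeratorTerm_le_exp {k m n : ℕ} (hn : 0 < n) (hk : k ≤ n)
    (hm : (m : ℝ) ≤ (n : ℝ) ^ (1 / 4 : ℝ)) :
    numeratorTerm k m n ≤ exp ((2 + 3 * (n : ℝ) ^ (3 / 4 : ℝ)) * (2 + log n)) := by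
  have hn₁ : (1 : ℝ) ≤ n := by exact_mod_cast hn
  have hq : (n : ℝ) ^ (1 / 4 : ℝ) ≤ n ^ (3 / 4 : ℝ) :=
    rpow_le_rpow_of_exponent_le hn₁ (by norm_num)
  have hmn : m ≤ n := by
    have : (n : ℝ) ^ (1 / 4 : ℝ) ≤ n := rpow_le_self_of_one_le hn₁ (by norm_num)
    exact_mod_cast hm.trans this
  have hsqrt : (m : ℝ) * √n ≤ n ^ (3 / 4 : ℝ) :=
    calc (m : ℝ) * √n ≤ n ^ (1 / 4 : ℝ) * n ^ (1 / 2 : ℝ) := by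
          rw [sqrt_eq_rpow]; gcongr
      _ = n ^ (3 / 4 : ℝ) := by rw [← rpow_add (by positivity)]; norm_num
  refine (mul_choose_mul_pow_mul_gchoose_le_exp hn hk hmn (by positivity)).trans
    (exp_le_exp.2 (mul_le_mul_of_nonneg_right ?_ ?_))
  · linarith
  · linarith [log_nonneg hn₁]

theorem isLittleO_rpow_three_quarters_mul_log :
    (fun x : ℝ => (2 + 3 * x ^ (3 / 4 : ℝ)) * (2 + log x)) =o[atTop] fun x => x := by
  have hconst : ∀ {s : ℝ}, 0 < s → (fun _ : ℝ => (2 : ℝ)) =o[atTop] fun x => x ^ s := fun hs =>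
    isLittleO_const_left.2 (Or.inr (tendsto_norm_atTop_atTop.comp (tendsto_rpow_atTop hs)))
  have h₁ : (fun x : ℝ => 2 + 3 * x ^ (3 / 4 : ℝ)) =O[atTop] fun x => x ^ (3 / 4 : ℝ) :=
    (hconst (by norm_num)).isBigO.add ((isBigO_refl _ _).const_mul_left 3)
  have h₂ : (fun x : ℝ => 2 + log x) =o[atTop] fun x => x ^ (1 / 4 : ℝ) :=
    (hconst (by norm_num)).add (isLittleO_log_rpow_atTop (by norm_num))
  refine (h₁.mul_isLittleO h₂).congr' EventuallyEq.rfl ?_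
  filter_upwards [eventually_gt_atTop 0] with x hx
  rw [← rpow_add hx]
  norm_num

theorem exists_exp_mul_le_choose {c lam : ℝ} (hc₀ : 0 < c) (hc₁ : c < 1) (hlam : lam < 1) :
    ∃ α > 0, ∀ᶠ p : ℕ in atTop,
      exp (α * p) ≤ (p.choose (⌊c * p⌋₊ + ⌊(p : ℝ) ^ lam⌋₊) : ℝ) := by
  set a := (1 + c) / 2 with ha
  have ha₀ : 0 < a := by positivity
  have ha₁ : a < 1 := by linarith
  have hloga : 0 < log a⁻¹ := log_pos ((one_lt_inv₀ ha₀).2 ha₁)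
  refine ⟨c / 2 * log a⁻¹, by positivity, ?_⟩
  have hsmall : ∀ᶠ p : ℕ in atTop, (p : ℝ) ^ (lam - 1) < a - c := by
    have := (tendsto_rpow_neg_atTop (sub_pos.2 hlam)).comp tendsto_natCast_atTop_atTop
    simpa only [neg_sub, Function.comp_def] using this.eventually (gt_mem_nhds (by linarith))
  have hlarge : ∀ᶠ p : ℕ in atTop, 1 ≤ c / 2 * p :=
    (tendsto_natCast_atTop_atTop.const_mul_atTop (by positivity)).eventually_ge_atTop 1
  filter_upwards [hsmall, hlarge, eventually_gt_atTop 0] with p hsmall hlarge hp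
  have hp₀ : (0 : ℝ) < p := by exact_mod_cast hp
  set r := ⌊c * p⌋₊ + ⌊(p : ℝ) ^ lam⌋₊
  have hfloor : c * p - 1 < ⌊c * p⌋₊ := Nat.sub_one_lt_floor _
  have hpow : (p : ℝ) ^ lam ≤ (a - c) * p := by
    rw [← div_mul_cancel₀ ((p : ℝ) ^ lam) hp₀.ne', ← rpow_sub_one hp₀.ne']
    exact mul_le_mul_of_nonneg_right hsmall.le hp₀.le
  have hr_le : (r : ℝ) ≤ a * p := by
    have := Nat.floor_le (by positivity : 0 ≤ c * p)
    have := Nat.floor_le (by positivity : (0 : ℝ) ≤ p ^ lam)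
    push_cast [r]
    nlinarith
  have hr_ge : c / 2 * p ≤ r := by
    push_cast [r]
    linarith [(⌊(p : ℝ) ^ lam⌋₊).cast_nonneg (α := ℝ)]
  calc exp (c / 2 * log a⁻¹ * p) ≤ exp (r * log a⁻¹) := by
        rw [mul_right_comm]; gcongr
    _ = a⁻¹ ^ r := by rw [exp_nat_mul, exp_log (by positivity)]
    _ ≤ p.choose r := inv_pow_le_choose ha₀ ha₁.le hr_le

theorem tendsto_div_of_le_exp {N D g : ℕ → ℝ} {α : ℝ} (hα : 0 < α)
    (hg : g =o[atTop] fun n => (n : ℝ)) (hN₀ : ∀ᶠ n in atTop, 0 ≤ N n)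
    (hN : ∀ᶠ n in atTop, N n ≤ exp (g n)) (hD : ∀ᶠ n : ℕ in atTop, exp (α * n) ≤ D n) :
    Tendsto (fun n => N n / D n) atTop (𝓝 0) := by
  have hdecay : Tendsto (fun n : ℕ => exp (-(α / 2 * n))) atTop (𝓝 0) :=
    tendsto_exp_neg_atTop_nhds_zero.comp
      (tendsto_natCast_atTop_atTop.const_mul_atTop (half_pos hα))
  refine squeeze_zero' ?_ ?_ hdecay
  · filter_upwards [hN₀, hD] with n hN₀ hD
    exact div_nonneg hN₀ ((exp_pos _).le.trans hD)
  filter_upwards [hN, hD, hg.bound (half_pos hα)] with n hN hD hg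
  rw [norm_natCast, norm_eq_abs] at hg
  calc N n / D n ≤ exp (g n) / exp (α * n) := div_le_div₀ (exp_pos _).le hN (exp_pos _) hD
    _ = exp (g n - α * n) := (exp_sub _ _).symm
    _ ≤ exp (-(α / 2 * n)) := by gcongr; linarith [le_abs_self (g n)]

theorem stmt_16_general (c δ lam : ℝ) (hc0 : 0 < c) (hc1 : c < 1)
    (hδ1 : δ < 1 / 4) (hlam1 : lam < δ)
    (k m r : ℕ → ℕ)
    (hk : ∀ p : ℕ, k p = ⌊c * (p : ℝ)⌋₊)
    (hm : ∀ p : ℕ, m p = ⌊(p : ℝ) ^ δ⌋₊)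
    (hr : ∀ p : ℕ, r p = k p + ⌊(p : ℝ) ^ lam⌋₊) :
    Tendsto (fun p : ℕ =>
        (m p : ℝ) * ((k p + m p).choose (m p) : ℝ) * (p : ℝ) ^ (m p) *
          gchoose ((m p : ℝ) * Real.sqrt p + 1 + (k p : ℝ) + (m p : ℝ))
            ((m p : ℝ) * Real.sqrt p + 1)
          / (p.choose (r p) : ℝ))
      (atTop ⊓ 𝓟 {p : ℕ | p.Prime}) (nhds 0) := by
  obtain ⟨α, hα, hden⟩ := exists_exp_mul_le_choose hc0 hc1 (by linarith : lam < 1)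
  refine Tendsto.mono_left ?_ inf_le_left
  refine tendsto_div_of_le_exp (N := fun p => numeratorTerm (k p) (m p) p) hα
    (isLittleO_rpow_three_quarters_mul_log.comp_tendsto tendsto_natCast_atTop_atTop)
    (.of_forall fun p => numeratorTerm_nonneg _ _ _) ?_ (by simpa only [hr, hk] using hden)
  filter_upwards [eventually_gt_atTop 0] with p hp
  have hp₁ : (1 : ℝ) ≤ p := by exact_mod_cast hp
  refine numeratorTerm_le_exp hp ?_ ?_
  · rw [hk]
    exact Nat.floor_le_of_le (mul_le_of_le_one_left (by positivity) hc1.le)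
  · rw [hm]
    exact (Nat.floor_le (by positivity)).trans
      (rpow_le_rpow_of_exponent_le hp₁ hδ1.le)

/-- With `k = ⌊cp⌋`, `m = ⌊p^δ⌋`, `r = k + ⌊p^λ⌋` for constants
`c ∈ (0,1)`, `δ ∈ (0,1/4)`, `λ ∈ (0,δ)`, as the prime `p → ∞`,
`m C(k+m, m) p^m C(m√p + 1 + k + m, m√p + 1) / C(p, r) → 0`. -/
theorem stmt_16 (c δ lam : ℝ) (hc0 : 0 < c) (hc1 : c < 1)
    (hδ0 : 0 < δ) (hδ1 : δ < 1 / 4) (hlam0 : 0 < lam) (hlam1 : lam < δ)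
    (k m r : ℕ → ℕ)
    (hk : ∀ p : ℕ, k p = ⌊c * (p : ℝ)⌋₊)
    (hm : ∀ p : ℕ, m p = ⌊(p : ℝ) ^ δ⌋₊)
    (hr : ∀ p : ℕ, r p = k p + ⌊(p : ℝ) ^ lam⌋₊) :
    Tendsto (fun p : ℕ =>
        (m p : ℝ) * ((k p + m p).choose (m p) : ℝ) * (p : ℝ) ^ (m p) *
          gchoose ((m p : ℝ) * Real.sqrt p + 1 + (k p : ℝ) + (m p : ℝ))
            ((m p : ℝ) * Real.sqrt p + 1)
          / (p.choose (r p) : ℝ))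
      (atTop ⊓ 𝓟 {p : ℕ | p.Prime}) (nhds 0) :=
  stmt_16_general c δ lam hc0 hc1 hδ1 hlam1 k m r hk hm hr
end
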